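/- Let (Ω, 𝓕, μ) be a probability space, S a finite index set, and for each i ∈ S let X_i : Ω → ℝ be measurable. Fix f > 0 and 0 < α < 1, and for each i ∈ S let ℓ_i > 0, β_i > 0 with f ≥ ℓ_i(1−α)β_i, let F_i be the Cliff penalty function with parameters (ℓ_i, f, α, β_i), let c_i ≥ 0, and define the bid B_i = c_i + ∫ F_i(X_i(ω)) dμ(ω). If ∑_{i∈S} ℓ_i ≥ M/α for a real number M > 0, then μ({ω : ∑_{i∈S} X_i(ω) < M}) ≤ (1/f)·∑_{i∈S} B_i. -/

import Mathlib

/-!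
If the total reduction falls short of `M ≤ α ∑ ℓ i`, some agent `i` must fall short of
`α ℓ i`, which is exactly where its Cliff penalty is the full `f`. Markov's inequality for the
nonnegative penalty bounds the probability of that event by `E[F_i(X_i)] / f ≤ B i / f`, and a
union bound over the agents finishes the proof.
-/

open MeasureTheory

/-- The Cliff penalty function with parameters `(ℓ, f, α, β)`. -/
noncomputable def cliffPenalty (ℓ f α β : ℝ) (X : ℝ) : ℝ :=
  if X < α * ℓ then f else if X < ℓ then (ℓ - X) * β else 0

section CliffPenalty

variable {ℓ f α β x : ℝ}

lemma measurable_cliffPenalty (ℓ f α β : ℝ) : Measurable (cliffPenalty ℓ f α β) :=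
  Measurable.ite (measurableSet_lt measurable_id measurable_const) measurable_const <|
    Measurable.ite (measurableSet_lt measurable_id measurable_const)
      ((measurable_const.sub measurable_id).mul measurable_const) measurable_const

lemma cliffPenalty_of_lt (h : x < α * ℓ) : cliffPenalty ℓ f α β x = f :=
  if_pos h

lemma cliffPenalty_nonneg (hf : 0 ≤ f) (hβ : 0 ≤ β) (x : ℝ) : 0 ≤ cliffPenalty ℓ f α β x := by
  unfold cliffPenalty
  split_ifs with _ hxℓ
  · exact hf
  · exact mul_nonneg (sub_pos.2 hxℓ).le hβ
  · exact le_rfl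

lemma abs_cliffPenalty_le (ℓ f α β x : ℝ) :
    |cliffPenalty ℓ f α β x| ≤ max |f| ((ℓ - α * ℓ) * |β|) := by
  unfold cliffPenalty
  split_ifs with hxαℓ hxℓ
  · exact le_max_left _ _
  · refine le_max_of_le_right ?_
    rw [abs_mul, abs_of_pos (sub_pos.2 hxℓ)]
    gcongr
    exact not_lt.1 hxαℓ
  · simp

variable {Ω : Type*} [MeasurableSpace Ω] {μ : Measure Ω} [IsFiniteMeasure μ] {X : Ω → ℝ}

lemma integrable_cliffPenalty_comp (hX : AEMeasurable X μ) :
    Integrable (fun ω ↦ cliffPenalty ℓ f α β (X ω)) μ :=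
  .of_bound ((measurable_cliffPenalty ℓ f α β).comp_aemeasurable hX).aestronglyMeasurable _ <|
    .of_forall fun ω ↦ abs_cliffPenalty_le ℓ f α β (X ω)

lemma mul_measureReal_lt_le_integral_cliffPenalty (hf : 0 ≤ f) (hβ : 0 ≤ β)
    (hX : AEMeasurable X μ) :
    f * μ.real {ω | X ω < α * ℓ} ≤ ∫ ω, cliffPenalty ℓ f α β (X ω) ∂μ :=
  calc f * μ.real {ω | X ω < α * ℓ}
      ≤ f * μ.real {ω | f ≤ cliffPenalty ℓ f α β (X ω)} :=
        mul_le_mul_of_nonneg_left (measureReal_mono fun _ hω ↦ (cliffPenalty_of_lt hω).ge) hf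
    _ ≤ ∫ ω, cliffPenalty ℓ f α β (X ω) ∂μ :=
        mul_meas_ge_le_integral_of_nonneg (.of_forall fun ω ↦ cliffPenalty_nonneg hf hβ (X ω))
          (integrable_cliffPenalty_comp hX) f

end CliffPenalty

lemma setOf_sum_lt_subset_biUnion {ι Ω : Type*} (S : Finset ι) (X : ι → Ω → ℝ) (t : ι → ℝ)
    {M : ℝ} (hM : M ≤ ∑ i ∈ S, t i) :
    {ω | ∑ i ∈ S, X i ω < M} ⊆ ⋃ i ∈ S, {ω | X i ω < t i} := fun _ hω ↦
  let ⟨_, hi, hlt⟩ := Finset.exists_lt_of_sum_lt (hω.trans_le hM)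
  Set.mem_biUnion hi hlt

theorem cliff_safety_margin_bound_general {Ω : Type*} [MeasurableSpace Ω] (μ : Measure Ω)
    [IsProbabilityMeasure μ] {ι : Type*} (S : Finset ι) (X : ι → Ω → ℝ)
    (f α M : ℝ) (ℓ β c B : ι → ℝ)
    (hX : ∀ i ∈ S, Measurable (X i))
    (hf : 0 < f) (hα0 : 0 < α)
    (hβ : ∀ i ∈ S, 0 < β i)
    (hc : ∀ i ∈ S, 0 ≤ c i)
    (hB : ∀ i ∈ S, B i = c i + ∫ ω, cliffPenalty (ℓ i) f α (β i) (X i ω) ∂μ)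
    (hMargin : M / α ≤ ∑ i ∈ S, ℓ i) :
    (μ {ω | ∑ i ∈ S, X i ω < M}).toReal ≤ (1 / f) * ∑ i ∈ S, B i := by
  have hcover : M ≤ ∑ i ∈ S, α * ℓ i := by
    rw [← Finset.mul_sum]
    exact (div_le_iff₀' hα0).1 hMargin
  have hmiss : ∀ i ∈ S, μ.real {ω | X i ω < α * ℓ i} ≤ 1 / f * B i := by
    intro i hi
    rw [one_div_mul_eq_div, le_div_iff₀' hf, hB i hi]
    have hmarkov : f * μ.real {ω | X i ω < α * ℓ i} ≤
        ∫ ω, cliffPenalty (ℓ i) f α (β i) (X i ω) ∂μ :=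
      mul_measureReal_lt_le_integral_cliffPenalty hf.le (hβ i hi).le (hX i hi).aemeasurable
    linarith [hc i hi]
  calc μ.real {ω | ∑ i ∈ S, X i ω < M}
      ≤ μ.real (⋃ i ∈ S, {ω | X i ω < α * ℓ i}) :=
        measureReal_mono (setOf_sum_lt_subset_biUnion S X _ hcover) (measure_ne_top _ _)
    _ ≤ ∑ i ∈ S, μ.real {ω | X i ω < α * ℓ i} := measureReal_biUnion_finset_le _ _
    _ ≤ ∑ i ∈ S, 1 / f * B i := Finset.sum_le_sum hmiss
    _ = 1 / f * ∑ i ∈ S, B i := (Finset.mul_sum _ _ _).symm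

/-- Safety-margin corollary of the Cliff-contract reliability bound: signing Cliff
contracts `(ℓ i, f, α, β i)` (same `f > 0` and `0 < α < 1`) whose commitments sum to
at least `M / α` bounds the probability of missing the actual goal `M > 0` by
`(1/f)` times the sum of the truthful bids `B i = c i + E[F_i(X_i)]`. -/
theorem cliff_safety_margin_bound {Ω : Type*} [MeasurableSpace Ω] (μ : Measure Ω)
    [IsProbabilityMeasure μ] {ι : Type*} (S : Finset ι) (X : ι → Ω → ℝ)
    (f α M : ℝ) (ℓ β c B : ι → ℝ)
    (hX : ∀ i ∈ S, Measurable (X i))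
    (hf : 0 < f) (hα0 : 0 < α) (hα1 : α < 1)
    (hℓ : ∀ i ∈ S, 0 < ℓ i) (hβ : ∀ i ∈ S, 0 < β i)
    (hfℓ : ∀ i ∈ S, ℓ i * (1 - α) * β i ≤ f)
    (hc : ∀ i ∈ S, 0 ≤ c i)
    (hB : ∀ i ∈ S, B i = c i + ∫ ω, cliffPenalty (ℓ i) f α (β i) (X i ω) ∂μ)
    (hM : 0 < M) (hMargin : M / α ≤ ∑ i ∈ S, ℓ i) :
    (μ {ω | ∑ i ∈ S, X i ω < M}).toReal ≤ (1 / f) * ∑ i ∈ S, B i :=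
  cliff_safety_margin_bound_general μ S X f α M ℓ β c B hX hf hα0 hβ hc hB hMargin
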